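/- The rule-based contension inconsistency measure I^RB_c satisfies Rule Consistency: I^RB_c(B) = 0 if and only if R(B) ∪ F' is consistent for every consistent subset F' of the facts F(B). -/

import Mathlib

open scoped Classical

/-- A rule over atoms `A`: literals are pairs (atom, sign). -/
structure Rule (A : Type*) where
  body : Finset (A × Bool)
  head : A × Bool
deriving DecidableEq

abbrev RuleBase (A : Type*) := Finset (Rule A)

variable {A : Type*}

/-- The complement of a literal. -/
def litCompl (l : A × Bool) : A × Bool := (l.1, !l.2)

/-- The fact with head `l` (empty body). -/
def factR (l : A × Bool) : Rule A := ⟨∅, l⟩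

/-- The facts (empty-body rules) of a rule base. -/
noncomputable def facts [DecidableEq A] (B : RuleBase A) : RuleBase A :=
  B.filter (fun r => r.body = ∅)

/-- The proper (non-fact) rules of a rule base. -/
noncomputable def properRules [DecidableEq A] (B : RuleBase A) : RuleBase A :=
  B.filter (fun r => r.body ≠ ∅)

/-- A set of literals is closed w.r.t. a rule base. -/
def Closed (B : RuleBase A) (M : Set (A × Bool)) : Prop :=
  ∀ r ∈ B, (↑r.body ⊆ M) → r.head ∈ M

/-- The minimal model: the smallest closed set of literals. -/
def minModel (B : RuleBase A) : Set (A × Bool) :=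
  {l | ∀ M : Set (A × Bool), Closed B M → l ∈ M}

/-- A set of literals is consistent if it contains no complementary pair. -/
def ConsistentLits (M : Set (A × Bool)) : Prop :=
  ¬ ∃ a : A, (a, true) ∈ M ∧ (a, false) ∈ M

/-- A rule base is consistent if its minimal model is consistent. -/
def Consistent (B : RuleBase A) : Prop := ConsistentLits (minModel B)

/-- The minimal inconsistent subsets of a rule base. -/
def MI (B : RuleBase A) : Set (RuleBase A) :=
  { M | M ⊆ B ∧ ¬ Consistent M ∧ ∀ M' ⊂ M, Consistent M' }

/-- `M` contains a complementary pair of facts. -/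
def hasComplFactPair (M : RuleBase A) : Prop :=
  ∃ a : A, factR (a, true) ∈ M ∧ factR (a, false) ∈ M

/-- Minimal inconsistent subsets containing no complementary pair of facts. -/
def MIF (B : RuleBase A) : Set (RuleBase A) :=
  { M ∈ MI B | ¬ hasComplFactPair M }

/-- A formula is free in a rule base if it belongs to no minimal inconsistent subset. -/
def Free (r : Rule A) (B : RuleBase A) : Prop := ∀ M ∈ MI B, r ∉ M

/-- Rule consistency: the rules together with any consistent set of facts are consistent. -/
def RuleConsistent [DecidableEq A] (B : RuleBase A) : Prop :=
  ∀ F' ⊆ facts B, Consistent F' → Consistent (properRules B ∪ F')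

/-- The drastic inconsistency measure. -/
noncomputable def Idr (B : RuleBase A) : ℕ := if Consistent B then 0 else 1

/-- The rule-based drastic inconsistency measure. -/
noncomputable def IRBd (B : RuleBase A) : ℕ := if MIF B = ∅ then 0 else 1

/-- The rule-based MI-inconsistency measure. -/
noncomputable def IRBMI (B : RuleBase A) : ℕ := (MIF B).ncard

/-- The rule-based problematic inconsistency measure: number of distinct
    non-fact rules occurring in some element of `MIF B`. -/
noncomputable def IRBp (B : RuleBase A) : ℕ :=
  {r : Rule A | r.body ≠ ∅ ∧ ∃ M ∈ MIF B, r ∈ M}.ncard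

/-- Three truth values. -/
inductive TV | t | b | f
deriving DecidableEq

def TV.negv : TV → TV
  | .t => .f
  | .f => .t
  | .b => .b

/-- Value of a literal under a three-valued interpretation. -/
def litVal (v : A → TV) (l : A × Bool) : TV :=
  if l.2 then v l.1 else (v l.1).negv

/-- Designated truth values. -/
def TV.des : TV → Prop
  | .f => False
  | _ => True

/-- Three-valued satisfaction of a rule. -/
def sat3 (v : A → TV) (r : Rule A) : Prop :=
  (∀ l ∈ r.body, (litVal v l).des) → (litVal v r.head).des

/-- The rule-based contension inconsistency measure. -/
noncomputable def IRBc (B : RuleBase A) : ℕ :=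
  sInf { n : ℕ | ∃ v : A → TV,
    (∀ M ∈ MIF B, ∀ r ∈ M, sat3 v r) ∧ n = {a : A | v a = TV.b}.ncard }

/-- The payoff of `α` in coalition `C` (w.r.t. rule base `B` and measure `I`). -/
noncomputable def CoalPayoff [DecidableEq A] (I : RuleBase A → ℝ) (B : RuleBase A)
    (α : Rule A) (C : RuleBase A) : ℝ :=
  ((Nat.factorial (C.card - 1) * Nat.factorial (B.card - C.card) : ℕ) : ℝ)
    / ((Nat.factorial B.card : ℕ) : ℝ) * (I C - I (C.erase α))

/-- The additional payoff shifted from facts to non-free rules. -/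
noncomputable def AddPayoff [DecidableEq A] (I : RuleBase A → ℝ) (B : RuleBase A)
    (r : Rule A) (C : RuleBase A) : ℝ :=
  if Free r C then 0
  else (∑ f ∈ C.filter (fun x => x.body = ∅), CoalPayoff I B f C)
        / ((C.filter (fun x => x.body ≠ ∅ ∧ ¬ Free x C)).card : ℝ)

/-- The adjusted Shapley inconsistency value. -/
noncomputable def Sstar [DecidableEq A] (I : RuleBase A → ℝ) (B : RuleBase A)
    (α : Rule A) : ℝ :=
  if α.body = ∅ then 0
  else ∑ C ∈ B.powerset, (CoalPayoff I B α C + AddPayoff I B α C)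

/-
`IRBc B = 0` says exactly that some two-valued interpretation satisfies every element of
`MIF B`. The designated literals of a two-valued model form a closed consistent set, so such a
model exists iff `MIF B` is empty. And `MIF B` is empty iff rules plus consistent facts never
clash: an inconsistent `properRules B ∪ F'` contains a minimal inconsistent subset, whose
facts come from the consistent `F'`; conversely the facts of an element of `MIF B` are
consistent, and together with the rules of `B` they contain that inconsistent element.
-/

lemma minModel_subset_of_closed {B : RuleBase A} {M : Set (A × Bool)} (hM : Closed B M) :
    minModel B ⊆ M :=
  fun _ hl => hl M hM

lemma minModel_mono {B₁ B₂ : RuleBase A} (h : B₁ ⊆ B₂) : minModel B₁ ⊆ minModel B₂ :=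
  fun _ hl M hM => hl M fun r hr => hM r (h hr)

lemma mem_minModel_of_factR_mem {B : RuleBase A} {l : A × Bool} (h : factR l ∈ B) :
    l ∈ minModel B :=
  fun _ hM => hM _ h (by simp [factR])

lemma Consistent.mono {B₁ B₂ : RuleBase A} (h : B₁ ⊆ B₂) (h₂ : Consistent B₂) :
    Consistent B₁ :=
  fun ⟨a, ht, hf⟩ => h₂ ⟨a, minModel_mono h ht, minModel_mono h hf⟩

lemma exists_mem_MI_subset {B M : RuleBase A} (hMB : M ⊆ B) (hM : ¬ Consistent M) :
    ∃ M' ∈ MI B, M' ⊆ M := by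
  obtain ⟨M', hM'M, hmin⟩ :=
    exists_minimal_le_of_wellFoundedLT (fun N : RuleBase A => ¬ Consistent N) M hM
  exact ⟨M', ⟨hM'M.trans hMB, hmin.prop, fun N hN => not_not.mp (hmin.not_prop_of_lt hN)⟩,
    hM'M⟩

lemma eq_factR_head {r : Rule A} (h : r.body = ∅) : r = factR r.head := by
  cases r
  simp_all [factR]

lemma hasComplFactPair.mono {B₁ B₂ : RuleBase A} (h : B₁ ⊆ B₂) (h₁ : hasComplFactPair B₁) :
    hasComplFactPair B₂ :=
  let ⟨a, ht, hf⟩ := h₁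
  ⟨a, h ht, h hf⟩

lemma consistent_iff_not_hasComplFactPair {B : RuleBase A} (hB : ∀ r ∈ B, r.body = ∅) :
    Consistent B ↔ ¬ hasComplFactPair B := by
  constructor
  · rintro hcons ⟨a, ht, hf⟩
    exact hcons ⟨a, mem_minModel_of_factR_mem ht, mem_minModel_of_factR_mem hf⟩
  · rintro hpair ⟨a, ht, hf⟩
    have hclosed : Closed B {l | factR l ∈ B} := fun r hr _ => by
      rwa [Set.mem_ofPred_eq, ← eq_factR_head (hB r hr)]
    exact hpair ⟨a, minModel_subset_of_closed hclosed ht, minModel_subset_of_closed hclosed hf⟩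

section DecidableFacts

variable [DecidableEq A]

lemma facts_mono {B₁ B₂ : RuleBase A} (h : B₁ ⊆ B₂) : facts B₁ ⊆ facts B₂ :=
  Finset.filter_subset_filter _ h

lemma facts_subset (B : RuleBase A) : facts B ⊆ B :=
  Finset.filter_subset _ _

lemma body_eq_empty_of_mem_facts {B : RuleBase A} {r : Rule A} (h : r ∈ facts B) :
    r.body = ∅ :=
  (Finset.mem_filter.mp h).2

lemma subset_properRules_union_facts {B M : RuleBase A} (h : M ⊆ B) :
    M ⊆ properRules B ∪ facts M := fun r hr => by
  by_cases hb : r.body = ∅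
  · exact Finset.mem_union_right _ (Finset.mem_filter.mpr ⟨hr, hb⟩)
  · exact Finset.mem_union_left _ (Finset.mem_filter.mpr ⟨h hr, hb⟩)

lemma properRules_union_subset {B F : RuleBase A} (hF : F ⊆ facts B) :
    properRules B ∪ F ⊆ B :=
  Finset.union_subset (Finset.filter_subset _ _) (hF.trans (facts_subset B))

lemma mem_of_factR_mem_properRules_union {B F : RuleBase A} {l : A × Bool}
    (h : factR l ∈ properRules B ∪ F) : factR l ∈ F :=
  (Finset.mem_union.mp h).resolve_left fun hp => (Finset.mem_filter.mp hp).2 rfl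

lemma MIF_eq_empty_iff_ruleConsistent (B : RuleBase A) : MIF B = ∅ ↔ RuleConsistent B := by
  constructor
  · intro hMIF F' hF' hF'cons
    by_contra hinc
    obtain ⟨M, hMI, hMsub⟩ := exists_mem_MI_subset (properRules_union_subset hF') hinc
    have hpair : ¬ hasComplFactPair M := by
      rintro ⟨a, ht, hf⟩
      refine (consistent_iff_not_hasComplFactPair fun r hr =>
        body_eq_empty_of_mem_facts (hF' hr)).mp hF'cons ⟨a, ?_, ?_⟩
      · exact mem_of_factR_mem_properRules_union (hMsub ht)
      · exact mem_of_factR_mem_properRules_union (hMsub hf)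
    exact (Set.eq_empty_iff_forall_notMem.mp hMIF) M ⟨hMI, hpair⟩
  · refine fun hRC => Set.eq_empty_iff_forall_notMem.mpr ?_
    rintro M ⟨⟨hMB, hMinc, -⟩, hpair⟩
    have hfacts : Consistent (facts M) :=
      (consistent_iff_not_hasComplFactPair fun _ => body_eq_empty_of_mem_facts).mpr
        fun h => hpair (h.mono (facts_subset M))
    exact hMinc ((hRC _ (facts_mono hMB) hfacts).mono (subset_properRules_union_facts hMB))

end DecidableFacts

lemma eq_b_of_des_of_des {v : A → TV} {a : A} (ht : (litVal v (a, true)).des)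
    (hf : (litVal v (a, false)).des) : v a = TV.b := by
  cases hva : v a <;> simp_all [litVal, TV.des, TV.negv]

lemma sat3_const_b (r : Rule A) : sat3 (fun _ => TV.b) r := fun _ => by
  unfold litVal
  split <;> trivial

lemma consistent_of_forall_sat3 {v : A → TV} (hv : ∀ a, v a ≠ TV.b) {M : RuleBase A}
    (hM : ∀ r ∈ M, sat3 v r) : Consistent M := by
  have hclosed : Closed M {l | (litVal v l).des} := fun r hr hbody => hM r hr hbody
  rintro ⟨a, ht, hf⟩
  exact hv a (eq_b_of_des_of_des (minModel_subset_of_closed hclosed ht)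
    (minModel_subset_of_closed hclosed hf))

-- Finiteness matters: `Set.ncard` of an infinite set is `0`, and so is `sInf ∅`.
lemma IRBc_eq_zero_iff [Finite A] (B : RuleBase A) :
    IRBc B = 0 ↔ ∃ v : A → TV, (∀ M ∈ MIF B, ∀ r ∈ M, sat3 v r) ∧ ∀ a, v a ≠ TV.b := by
  have hne : { n : ℕ | ∃ v : A → TV,
      (∀ M ∈ MIF B, ∀ r ∈ M, sat3 v r) ∧ n = {a : A | v a = TV.b}.ncard }.Nonempty :=
    ⟨_, fun _ => TV.b, fun _ _ r _ => sat3_const_b r, rfl⟩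
  rw [IRBc, Nat.sInf_eq_zero, or_iff_left hne.ne_empty]
  refine exists_congr fun v => and_congr_right fun _ => ?_
  rw [eq_comm, Set.ncard_eq_zero, Set.eq_empty_iff_forall_notMem]
  rfl

theorem stmt8 [DecidableEq A] [Fintype A] (B : RuleBase A) :
    IRBc B = 0 ↔ RuleConsistent B := by
  rw [IRBc_eq_zero_iff, ← MIF_eq_empty_iff_ruleConsistent]
  constructor
  · rintro ⟨v, hsat, hv⟩
    exact Set.eq_empty_iff_forall_notMem.mpr fun M hM =>
      hM.1.2.1 (consistent_of_forall_sat3 hv (hsat M hM))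
  · intro hMIF
    exact ⟨fun _ => TV.t, by simp [hMIF], by simp⟩
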